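/- For any positive integer n and any unit vectors |ψ⟩, |ψ'⟩ ∈ (ℂ²)^{⊗n}, the n-tangle satisfies |τ_n(|ψ⟩) − τ_n(|ψ'⟩)| ≤ √2 · ‖ψ − ψ'‖₁. -/

import Mathlib

open scoped BigOperators ComplexConjugate ComplexOrder

noncomputable section

namespace QIpaper

/-- Inner product `⟨ψ|φ⟩`, conjugate-linear in the first argument. -/
def braket {I : Type*} [Fintype I] (ψ φ : I → ℂ) : ℂ := ∑ x, conj (ψ x) * φ x

/-- Outer product `|ψ⟩⟨ψ|`. -/
def dm {I : Type*} (ψ : I → ℂ) : Matrix I I ℂ := Matrix.of fun x y => ψ x * conj (ψ y)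

open Classical in
/-- Positive semidefinite square root (junk value `0` on non-PSD matrices). -/
def psdSqrt {I : Type*} [Fintype I] [DecidableEq I] (A : Matrix I I ℂ) : Matrix I I ℂ :=
  if h : A.PosSemidef then
    h.1.eigenvectorUnitary.1 * Matrix.diagonal ((↑) ∘ Real.sqrt ∘ h.1.eigenvalues) *
      (star h.1.eigenvectorUnitary : Matrix I I ℂ)
  else 0

/-- The trace norm `‖A‖₁ = tr √(AᴴA)`. -/
def traceNorm {I : Type*} [Fintype I] [DecidableEq I] (A : Matrix I I ℂ) : ℝ :=
  (psdSqrt (A.conjTranspose * A)).trace.re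

/-- Fidelity `F(ρ,σ) = tr √(√ρ σ √ρ)`. -/
def fidelity {I : Type*} [Fintype I] [DecidableEq I] (ρ σ : Matrix I I ℂ) : ℝ :=
  (psdSqrt (psdSqrt ρ * σ * psdSqrt ρ)).trace.re

/-- Purity `tr(ρ²)`. -/
def purity {I : Type*} [Fintype I] (ρ : Matrix I I ℂ) : ℝ := ((ρ * ρ).trace).re

def sigmaX : Matrix (Fin 2) (Fin 2) ℂ := !![0, 1; 1, 0]
def sigmaY : Matrix (Fin 2) (Fin 2) ℂ := !![0, -Complex.I; Complex.I, 0]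
def sigmaZ : Matrix (Fin 2) (Fin 2) ℂ := !![1, 0; 0, -1]

/-- `σ_y^{⊗I}` on the qubits indexed by `I`. -/
def sigmaYn {I : Type*} [Fintype I] [DecidableEq I] : Matrix (I → Fin 2) (I → Fin 2) ℂ :=
  Matrix.of fun x y => ∏ k, sigmaY (x k) (y k)

/-- The `n`-tangle `τ(ψ) = |⟨ψ|σ_y^{⊗n}|ψ*⟩|`. -/
def tangle {I : Type*} [Fintype I] [DecidableEq I] (ψ : (I → Fin 2) → ℂ) : ℝ :=
  ‖(∑ x, ∑ y, conj (ψ x) * sigmaYn x y * conj (ψ y))‖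

/-- Entrywise complex conjugate of a matrix. -/
def conjM {I J : Type*} (ρ : Matrix I J ℂ) : Matrix I J ℂ := Matrix.of fun x y => conj (ρ x y)

/-- `ρ̃ = σ_y^{⊗n} ρ* σ_y^{⊗n}`. -/
def tildeM {I : Type*} [Fintype I] [DecidableEq I] (ρ : Matrix (I → Fin 2) (I → Fin 2) ℂ) :
    Matrix (I → Fin 2) (I → Fin 2) ℂ := sigmaYn * conjM ρ * sigmaYn

/-- The Wootters tilde `|ψ̃⟩ = σ_y^{⊗n}|ψ*⟩`. -/
def wtilde {I : Type*} [Fintype I] [DecidableEq I] (ψ : (I → Fin 2) → ℂ) : (I → Fin 2) → ℂ :=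
  sigmaYn.mulVec (fun x => conj (ψ x))

/-- Reduced density matrix of the pure state `ψ` on the qubits in `s`
(tracing out the complement). -/
def reduced {n : ℕ} (s : Finset (Fin n)) (ψ : (Fin n → Fin 2) → ℂ) :
    Matrix ({i : Fin n // i ∈ s} → Fin 2) ({i : Fin n // i ∈ s} → Fin 2) ℂ :=
  Matrix.of fun a b => ∑ c : {i : Fin n // i ∉ s} → Fin 2,
    ψ (fun i => if h : i ∈ s then a ⟨i, h⟩ else c ⟨i, h⟩) *
    conj (ψ (fun i => if h : i ∈ s then b ⟨i, h⟩ else c ⟨i, h⟩))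

/-- GME-concurrence `C_GME(ψ) = min_{∅ ⊊ γ ⊊ [n]} √(2(1 − tr ψ_γ²))`. -/
def gme {n : ℕ} (ψ : (Fin n → Fin 2) → ℂ) : ℝ :=
  sInf {r : ℝ | ∃ γ : Finset (Fin n), γ ≠ ∅ ∧ γ ≠ Finset.univ ∧
    r = Real.sqrt (2 * (1 - purity (reduced γ ψ)))}

/-- Concentratable entanglement `C(ψ; s) = 1 − 2^{−|s|} Σ_{γ⊆s} tr(ψ_γ²)`. -/
def CE {n : ℕ} (ψ : (Fin n → Fin 2) → ℂ) (s : Finset (Fin n)) : ℝ :=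
  1 - (1 / 2 ^ s.card) * ∑ γ ∈ s.powerset, purity (reduced γ ψ)

/-- The subnormalized post-measurement vector `(⟨v|⊗I)|Ψ⟩`. -/
def contract {IA IB : Type*} [Fintype IA] (v : IA → ℂ) (Ψ : IA × IB → ℂ) : IB → ℂ :=
  fun y => ∑ x, conj (v x) * Ψ (x, y)

/-- Probability `p_v = ⟨Ψ|(|v⟩⟨v| ⊗ I)|Ψ⟩` of outcome `v`. -/
def prob {IA IB : Type*} [Fintype IA] [Fintype IB] (v : IA → ℂ) (Ψ : IA × IB → ℂ) : ℝ :=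
  (braket (contract v Ψ) (contract v Ψ)).re

/-- Normalized post-measurement state (the zero vector when the probability vanishes). -/
def postState {IA IB : Type*} [Fintype IA] [Fintype IB] (v : IA → ℂ) (Ψ : IA × IB → ℂ) :
    IB → ℂ := fun y => ((Real.sqrt (prob v Ψ) : ℂ))⁻¹ * contract v Ψ y

/-- `b` is an orthonormal family. (An orthonormal family indexed by the space's own
index type is an orthonormal basis.) -/
def ONB {J I : Type*} [Fintype I] [DecidableEq J] (b : J → I → ℂ) : Prop :=
  ∀ i j, braket (b i) (b j) = if i = j then 1 else 0

/-- Average post-measurement entanglement `Ē_β(Ψ) = Σ_i p_i E(φ_i)`. -/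
def avgE {ι IA IB : Type*} [Fintype ι] [Fintype IA] [Fintype IB]
    (E : (IB → ℂ) → ℝ) (b : ι → IA → ℂ) (Ψ : IA × IB → ℂ) : ℝ :=
  ∑ i, prob (b i) Ψ * E (postState (b i) Ψ)

/-- Multipartite entanglement of assistance: supremum of `Ē_β` over all
orthonormal bases `β` of `H_A`. -/
def Lglobal {IA IB : Type*} [Fintype IA] [Fintype IB] [DecidableEq IA]
    (E : (IB → ℂ) → ℝ) (Ψ : IA × IB → ℂ) : ℝ :=
  sSup {r : ℝ | ∃ b : IA → IA → ℂ, ONB b ∧ r = avgE E b Ψ}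

/-- Tensor-product basis of `(ℂ²)^{⊗K}` built from single-qubit bases. -/
def productBasis {K : Type*} [Fintype K] (q : K → Fin 2 → Fin 2 → ℂ) :
    (K → Fin 2) → (K → Fin 2) → ℂ :=
  fun i x => ∏ k, q k (i k) (x k)

/-- Localizable multipartite entanglement: supremum of `Ē_β` over product bases of
single-qubit orthonormal bases of `H_A = (ℂ²)^{⊗K}`. -/
def Lloc {K IB : Type*} [Fintype K] [DecidableEq K] [Fintype IB]
    (E : (IB → ℂ) → ℝ) (Ψ : (K → Fin 2) × IB → ℂ) : ℝ :=
  sSup {r : ℝ | ∃ q : K → Fin 2 → Fin 2 → ℂ, (∀ k, ONB (q k)) ∧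
    r = avgE E (productBasis q) Ψ}

/-- Partial trace over the `A` system of `|Ψ⟩⟨Ψ|`. -/
def ptraceA {IA IB : Type*} [Fintype IA] (Ψ : IA × IB → ℂ) : Matrix IB IB ℂ :=
  Matrix.of fun y y' => ∑ x, Ψ (x, y) * conj (Ψ (x, y'))

/-- Reduced density matrix of `|Ψ⟩⟨Ψ|` on the subset `s` of the `B` qubits. -/
def reducedB {IA : Type*} [Fintype IA] {n : ℕ} (s : Finset (Fin n))
    (Ψ : IA × (Fin n → Fin 2) → ℂ) :
    Matrix ({i : Fin n // i ∈ s} → Fin 2) ({i : Fin n // i ∈ s} → Fin 2) ℂ :=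
  Matrix.of fun a b => ∑ x : IA, ∑ c : {i : Fin n // i ∉ s} → Fin 2,
    Ψ (x, fun i => if h : i ∈ s then a ⟨i, h⟩ else c ⟨i, h⟩) *
    conj (Ψ (x, fun i => if h : i ∈ s then b ⟨i, h⟩ else c ⟨i, h⟩))

/-!
Write `τ(ψ) = |⟨ψ|ψ̃⟩|` with the tilde map `ψ ↦ σ_y^{⊗n} ψ*`. Since `σ_y^{⊗n}` sends each basis
vector to a phase times its bitwise flip, the tilde map is a conjugate-linear isometry, so
`|τ(ψ) - τ(φ)| ≤ (‖ψ‖ + ‖φ‖) ‖ψ - φ‖`; moreover `τ` is blind to a global phase. Rotating the phase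
of `ψ'` so that `⟨ψ|ψ'⟩ = t := |⟨ψ|ψ'⟩|` gives `|τ(ψ) - τ(ψ')| ≤ 2 √(2 - 2t)`.

On the other side `D = |ψ⟩⟨ψ| - |ψ'⟩⟨ψ'|` is Hermitian with `D³ = (1 - t²) D`, so
`√(D†D) = D² / √(1 - t²)` and `‖D‖₁ = 2 √(1 - t²)`. The theorem follows from `t² ≤ t`.
-/

open Matrix

section Hilbert

variable {I : Type*} [Fintype I]

theorem braket_eq_inner (u v : I → ℂ) :
    braket u v = inner ℂ (WithLp.toLp 2 u : EuclideanSpace ℂ I) (WithLp.toLp 2 v) := by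
  simp [braket, PiLp.inner_apply, mul_comm]

theorem conj_braket (u v : I → ℂ) : conj (braket u v) = braket v u := by
  simp [braket, map_sum, mul_comm]

theorem norm_toLp_eq_one {u : I → ℂ} (hu : braket u u = 1) :
    ‖(WithLp.toLp 2 u : EuclideanSpace ℂ I)‖ = 1 := by
  have h : ‖(WithLp.toLp 2 u : EuclideanSpace ℂ I)‖ ^ 2 = 1 := by
    rw [← inner_self_eq_norm_sq (𝕜 := ℂ), ← braket_eq_inner, hu, RCLike.one_re]
  exact (pow_eq_one_iff_of_nonneg (norm_nonneg _) two_ne_zero).1 h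

theorem norm_braket_le_one {u v : I → ℂ} (hu : braket u u = 1) (hv : braket v v = 1) :
    ‖braket u v‖ ≤ 1 := by
  simpa [braket_eq_inner, norm_toLp_eq_one hu, norm_toLp_eq_one hv] using
    norm_inner_le_norm (𝕜 := ℂ) (WithLp.toLp 2 u : EuclideanSpace ℂ I) (WithLp.toLp 2 v)

end Hilbert

section InnerProductSpace

variable {E : Type*} [NormedAddCommGroup E] [InnerProductSpace ℂ E]

theorem exists_norm_eq_one_norm_sub_smul_sq {x y : E} (hx : ‖x‖ = 1) (hy : ‖y‖ = 1) :
    ∃ u : ℂ, ‖u‖ = 1 ∧ ‖x - u • y‖ ^ 2 = 2 - 2 * ‖inner ℂ x y‖ := by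
  set c := inner ℂ x y
  refine ⟨Complex.exp (↑(-c.arg) * Complex.I), Complex.norm_exp_ofReal_mul_I _, ?_⟩
  have hphase : Complex.exp (↑(-c.arg) * Complex.I) * c = ‖c‖ := by
    conv_lhs => rw [← Complex.norm_mul_exp_arg_mul_I c]
    rw [mul_left_comm, ← Complex.exp_add]
    simp
  rw [@norm_sub_sq ℂ, inner_smul_right, hphase, norm_smul, Complex.norm_exp_ofReal_mul_I, hx, hy,
    RCLike.re_to_complex, Complex.ofReal_re]
  ring

theorem abs_norm_inner_sub_norm_inner_le {a b a' b' : E} (ha' : ‖a'‖ = ‖a‖)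
    (hab' : ‖a' - b'‖ = ‖a - b‖) :
    |‖inner ℂ a a'‖ - ‖inner ℂ b b'‖| ≤ (‖a‖ + ‖b‖) * ‖a - b‖ := by
  have hsplit : inner ℂ a a' - inner ℂ b b' = inner ℂ (a - b) a' + inner ℂ b (a' - b') := by
    rw [inner_sub_left, inner_sub_right]; ring
  calc |‖inner ℂ a a'‖ - ‖inner ℂ b b'‖| ≤ ‖inner ℂ a a' - inner ℂ b b'‖ :=
        abs_norm_sub_norm_le _ _
    _ = ‖inner ℂ (a - b) a' + inner ℂ b (a' - b')‖ := by rw [hsplit]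
    _ ≤ ‖a - b‖ * ‖a'‖ + ‖b‖ * ‖a' - b'‖ :=
        (norm_add_le _ _).trans (add_le_add (norm_inner_le_norm _ _) (norm_inner_le_norm _ _))
    _ = (‖a‖ + ‖b‖) * ‖a - b‖ := by rw [ha', hab']; ring

end InnerProductSpace

section Tilde

variable {I : Type*} [Fintype I] [DecidableEq I]

def flipBits (x : I → Fin 2) : I → Fin 2 := fun k => x k + 1

omit [Fintype I] [DecidableEq I] in
theorem flipBits_involutive : Function.Involutive (flipBits (I := I)) := fun x => by
  funext k
  have : ∀ a : Fin 2, a + 1 + 1 = a := by decide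
  exact this (x k)

theorem sigmaYn_apply_eq_zero {x y : I → Fin 2} (h : y ≠ flipBits x) : sigmaYn x y = 0 := by
  obtain ⟨k, hk⟩ := Function.ne_iff.mp h
  have off_flip : ∀ a b : Fin 2, b ≠ a + 1 → sigmaY a b = 0 := by
    intro a b; fin_cases a <;> fin_cases b <;> simp [sigmaY]
  exact Finset.prod_eq_zero (Finset.mem_univ k) (off_flip _ _ hk)

theorem norm_sigmaYn_apply_flipBits (x : I → Fin 2) : ‖sigmaYn x (flipBits x)‖ = 1 := by
  simp only [sigmaYn, of_apply, norm_prod, flipBits]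
  refine Finset.prod_eq_one fun k _ => ?_
  generalize x k = a
  fin_cases a <;> simp [sigmaY]

theorem sigmaYn_mulVec_apply (v : (I → Fin 2) → ℂ) (x : I → Fin 2) :
    (sigmaYn *ᵥ v) x = sigmaYn x (flipBits x) * v (flipBits x) :=
  Fintype.sum_eq_single _ fun y hy => by dsimp only; rw [sigmaYn_apply_eq_zero hy, zero_mul]

theorem wtilde_sub (u v : (I → Fin 2) → ℂ) : wtilde (u - v) = wtilde u - wtilde v := by
  simp only [wtilde, Pi.sub_apply, map_sub, ← mulVec_sub]
  rfl

theorem wtilde_smul (c : ℂ) (u : (I → Fin 2) → ℂ) : wtilde (c • u) = conj c • wtilde u := by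
  simp only [wtilde, Pi.smul_apply, smul_eq_mul, map_mul, ← mulVec_smul]
  rfl

theorem norm_toLp_wtilde (u : (I → Fin 2) → ℂ) :
    ‖(WithLp.toLp 2 (wtilde u) : EuclideanSpace ℂ (I → Fin 2))‖ =
      ‖(WithLp.toLp 2 u : EuclideanSpace ℂ (I → Fin 2))‖ := by
  simp only [EuclideanSpace.norm_eq, wtilde, sigmaYn_mulVec_apply, norm_mul,
    norm_sigmaYn_apply_flipBits, Complex.norm_conj, one_mul]
  congr 1
  exact flipBits_involutive.bijective.sum_comp (fun x => ‖u x‖ ^ 2)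

theorem tangle_eq_norm_braket_wtilde (ψ : (I → Fin 2) → ℂ) :
    tangle ψ = ‖braket ψ (wtilde ψ)‖ := by
  simp only [tangle, braket, wtilde, mulVec, dotProduct, Finset.mul_sum, mul_assoc]

theorem tangle_smul (c : ℂ) (ψ : (I → Fin 2) → ℂ) : tangle (c • ψ) = ‖c‖ ^ 2 * tangle ψ := by
  simp only [tangle_eq_norm_braket_wtilde, wtilde_smul, braket_eq_inner, WithLp.toLp_smul,
    inner_smul_left, inner_smul_right, norm_mul, Complex.norm_conj]
  ring

theorem abs_tangle_sub_tangle_le (ψ φ : (I → Fin 2) → ℂ) :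
    |tangle ψ - tangle φ| ≤
      (‖(WithLp.toLp 2 ψ : EuclideanSpace ℂ (I → Fin 2))‖ + ‖WithLp.toLp 2 φ‖) *
        ‖WithLp.toLp 2 ψ - WithLp.toLp 2 φ‖ := by
  simp only [tangle_eq_norm_braket_wtilde, braket_eq_inner]
  refine abs_norm_inner_sub_norm_inner_le (norm_toLp_wtilde ψ) ?_
  rw [← WithLp.toLp_sub, ← wtilde_sub, norm_toLp_wtilde, WithLp.toLp_sub]

end Tilde

section TraceNorm

variable {I : Type*} [Fintype I] [DecidableEq I]

open scoped MatrixOrder in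
theorem psdSqrt_eq_of_mul_self_eq {A S : Matrix I I ℂ} (hS : S.PosSemidef) (h : S * S = A) :
    psdSqrt A = S := by
  have hA : A.PosSemidef := by
    rw [← h]; nth_rewrite 1 [← hS.1.eq]; exact posSemidef_conjTranspose_mul_self S
  rw [psdSqrt, dif_pos hA, ← CFC.sqrt_unique h hS.nonneg, CFC.sqrt_eq_cfc,
    cfc_nnreal_eq_real _ A hA.nonneg, hA.1.cfc_eq]
  have he : ∀ i, max (hA.1.eigenvalues i) 0 = hA.1.eigenvalues i :=
    fun i => max_eq_left (hA.eigenvalues_nonneg i)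
  simp [Matrix.IsHermitian.cfc, Real.coe_sqrt, Real.coe_toNNReal', Function.comp_def, he]

theorem _root_.Matrix.IsHermitian.mul_self_eq_zero_of_cube_eq_zero {D : Matrix I I ℂ}
    (hD : D.IsHermitian) (h : D * D * D = 0) : D * D = 0 := by
  refine conjTranspose_mul_self_eq_zero.mp ?_
  rw [conjTranspose_mul, hD.eq, ← mul_assoc, h, zero_mul]

/-- At `μ = 0` the right-hand side is `0` through `0⁻¹ = 0`, and indeed `D * D = 0` then. -/
theorem psdSqrt_mul_self_of_cube {D : Matrix I I ℂ} (hD : D.IsHermitian) {μ : ℝ} (hμ : 0 ≤ μ)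
    (h : D * D * D = μ ^ 2 • D) : psdSqrt (D * D) = μ⁻¹ • (D * D) := by
  rcases hμ.eq_or_lt with rfl | hμ
  · have hDD : D * D = 0 := hD.mul_self_eq_zero_of_cube_eq_zero (by simpa using h)
    rw [hDD, smul_zero]
    exact psdSqrt_eq_of_mul_self_eq PosSemidef.zero (zero_mul 0)
  · have hpsd : (D * D).PosSemidef := by
      nth_rewrite 1 [← hD.eq]; exact posSemidef_conjTranspose_mul_self D
    refine psdSqrt_eq_of_mul_self_eq (hpsd.smul (inv_nonneg.mpr hμ.le)) ?_
    rw [smul_mul_smul_comm, ← mul_assoc, h, smul_mul_assoc, smul_smul,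
      show μ⁻¹ * μ⁻¹ * μ ^ 2 = 1 by field_simp, one_smul]

theorem traceNorm_of_cube {D : Matrix I I ℂ} (hD : D.IsHermitian) {μ : ℝ} (hμ : 0 ≤ μ)
    (h : D * D * D = μ ^ 2 • D) : traceNorm D = μ⁻¹ * (D * D).trace.re := by
  rw [traceNorm, hD.eq, psdSqrt_mul_self_of_cube hD hμ h, trace_smul, Complex.real_smul,
    Complex.re_ofReal_mul]

end TraceNorm

section PureState

variable {I : Type*} [Fintype I] {ψ φ : I → ℂ}

omit [Fintype I] in
theorem dm_eq_vecMulVec (u : I → ℂ) : dm u = vecMulVec u (star u) := rfl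

theorem braket_eq_dotProduct (u v : I → ℂ) : braket u v = star u ⬝ᵥ v := rfl

omit [Fintype I] in
theorem isHermitian_dm_sub_dm : (dm ψ - dm φ).IsHermitian := by
  simp only [IsHermitian, conjTranspose_sub, dm_eq_vecMulVec, conjTranspose_vecMulVec, star_star]

theorem dm_sub_dm_cube (hψ : braket ψ ψ = 1) (hφ : braket φ φ = 1) :
    (dm ψ - dm φ) * (dm ψ - dm φ) * (dm ψ - dm φ) =
      (1 - ‖braket ψ φ‖ ^ 2) • (dm ψ - dm φ) := by
  have hcc : conj (braket ψ φ) * braket ψ φ = ((‖braket ψ φ‖ ^ 2 : ℝ) : ℂ) := by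
    rw [Complex.conj_mul', Complex.ofReal_pow]
  simp only [dm_eq_vecMulVec, sub_mul, mul_sub, vecMulVec_mul_vecMulVec, ← braket_eq_dotProduct,
    hψ, hφ, ← conj_braket ψ φ, vecMulVec_smul, one_smul, Matrix.smul_mul, smul_smul]
  rw [← Complex.coe_smul, Complex.ofReal_sub, Complex.ofReal_one, ← hcc]
  module

theorem re_trace_dm_sub_dm_sq (hψ : braket ψ ψ = 1) (hφ : braket φ φ = 1) :
    ((dm ψ - dm φ) * (dm ψ - dm φ)).trace.re = 2 * (1 - ‖braket ψ φ‖ ^ 2) := by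
  simp only [dm_eq_vecMulVec, sub_mul, mul_sub, vecMulVec_mul_vecMulVec, trace_sub,
    trace_vecMulVec, dotProduct_comm ψ, dotProduct_comm φ, smul_dotProduct, ← braket_eq_dotProduct,
    hψ, hφ, ← conj_braket ψ φ, smul_eq_mul, Complex.conj_mul', Complex.mul_conj']
  norm_cast
  ring

theorem traceNorm_dm_sub_dm [DecidableEq I] (hψ : braket ψ ψ = 1) (hφ : braket φ φ = 1) :
    traceNorm (dm ψ - dm φ) = 2 * √(1 - ‖braket ψ φ‖ ^ 2) := by
  have hμ : √(1 - ‖braket ψ φ‖ ^ 2) ^ 2 = 1 - ‖braket ψ φ‖ ^ 2 :=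
    Real.sq_sqrt (by nlinarith [norm_nonneg (braket ψ φ), norm_braket_le_one hψ hφ])
  rw [traceNorm_of_cube isHermitian_dm_sub_dm (Real.sqrt_nonneg _) (hμ ▸ dm_sub_dm_cube hψ hφ),
    re_trace_dm_sub_dm_sq hψ hφ]
  set μ := √(1 - ‖braket ψ φ‖ ^ 2)
  rw [← hμ, sq, mul_left_comm, ← mul_assoc μ⁻¹, inv_mul_mul_self]

end PureState

theorem tangle_continuity_general (n : ℕ)
    (ψ ψ' : (Fin n → Fin 2) → ℂ) (hψ : braket ψ ψ = 1) (hψ' : braket ψ' ψ' = 1) :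
    |tangle ψ - tangle ψ'| ≤ Real.sqrt 2 * traceNorm (dm ψ - dm ψ') := by
  have hx := norm_toLp_eq_one hψ
  have hy := norm_toLp_eq_one hψ'
  obtain ⟨u, hu, hdist⟩ := exists_norm_eq_one_norm_sub_smul_sq hx hy
  rw [← braket_eq_inner] at hdist
  set t := ‖braket ψ ψ'‖
  have ht : t ≤ 1 := norm_braket_le_one hψ hψ'
  have hsqrt : √(2 - 2 * t) ≤ √2 * √(1 - t ^ 2) := by
    rw [← Real.sqrt_mul zero_le_two]
    exact Real.sqrt_le_sqrt (by nlinarith [norm_nonneg (braket ψ ψ')])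
  calc |tangle ψ - tangle ψ'| = |tangle ψ - tangle (u • ψ')| := by
        rw [tangle_smul, hu, one_pow, one_mul]
    _ ≤ (‖(WithLp.toLp 2 ψ : EuclideanSpace ℂ _)‖ + ‖WithLp.toLp 2 (u • ψ')‖) *
          ‖WithLp.toLp 2 ψ - WithLp.toLp 2 (u • ψ')‖ := abs_tangle_sub_tangle_le _ _
    _ = 2 * √(2 - 2 * t) := by
        rw [WithLp.toLp_smul, norm_smul, hu, hx, hy, ← hdist, Real.sqrt_sq (norm_nonneg _)]
        ring
    _ ≤ √2 * (2 * √(1 - t ^ 2)) := by linarith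
    _ = √2 * traceNorm (dm ψ - dm ψ') := by rw [traceNorm_dm_sub_dm hψ hψ']

/-- Lipschitz continuity of the `n`-tangle:
`|τ_n(ψ) − τ_n(ψ')| ≤ √2 ‖ψ − ψ'‖₁` for unit vectors `ψ, ψ' ∈ (ℂ²)^{⊗n}`. -/
theorem tangle_continuity (n : ℕ) (hn : 0 < n)
    (ψ ψ' : (Fin n → Fin 2) → ℂ) (hψ : braket ψ ψ = 1) (hψ' : braket ψ' ψ' = 1) :
    |tangle ψ - tangle ψ'| ≤ Real.sqrt 2 * traceNorm (dm ψ - dm ψ') :=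
  tangle_continuity_general n ψ ψ' hψ hψ'

end QIpaper
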